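/- Let r be a positive integer with r < q − 1. If P(x) = x^r f(x^s) is a permutation polynomial over 𝔽_q, then all of the following hold: (i) gcd(r, s) = 1; (ii) A_i = f(ξ^i) ≠ 0 for every i = 0, 1, …, l − 1; (iii) for every integer b with γ^b = A_0 A_1 ⋯ A_{l−1}, l divides 2b. -/

import Mathlib

open Finset Function

/-!
Write `P(x) = x^r f(x^s)`. For (i), a common `gcd(r, s)`-th root of unity `ζ` satisfies
`P(ζ) = P(1)`; for (ii), `A_i = 0` would give `P(γ^i) = 0 = P(0)`. For (iii): the nonzero elements
are the powers of `γ`, so their `s`-th powers are exactly the `l`-th roots of unity `ξ^i`. As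
`P(x)^s = h(x^s)` with `h(z) = z^r f(z)^s` and `P` permutes `𝔽_q^*`, `h` permutes the `ξ^i`.
Comparing `∏ h(ξ^i)` with `∏ ξ^i = ξ^N`, `2N = l(l-1)`, gives `γ^{s(N(r-1)+b)} = 1`, so
`l ∣ N(r-1) + b` and hence `l ∣ 2b`.
-/

theorem orderOf_pow_of_orderOf_eq_mul {M : Type*} [Monoid M] {x : M} {l s : ℕ}
    (h : orderOf x = l * s) (hs : s ≠ 0) : orderOf (x ^ s) = l := by
  rw [orderOf_pow_of_dvd hs (h ▸ dvd_mul_left s l), h,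
    Nat.mul_div_cancel _ (Nat.pos_of_ne_zero hs)]

theorem coprime_of_injective_pow_mul_comp_pow {M : Type*} [Monoid M] {γ : M}
    (hγ : orderOf γ ≠ 0) {r s : ℕ} (hs : s ∣ orderOf γ) {g : M → M}
    (hg : Injective fun x => x ^ r * g (x ^ s)) : r.Coprime s := by
  set d := r.gcd s
  have hd : d ∣ orderOf γ := (Nat.gcd_dvd_right r s).trans hs
  set ζ := γ ^ (orderOf γ / d)
  have hζ : orderOf ζ = d := orderOf_pow_orderOf_div hγ hd
  have hζr : ζ ^ r = 1 := orderOf_dvd_iff_pow_eq_one.1 (hζ ▸ Nat.gcd_dvd_left r s)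
  have hζs : ζ ^ s = 1 := orderOf_dvd_iff_pow_eq_one.1 (hζ ▸ Nat.gcd_dvd_right r s)
  have hζ1 : ζ = 1 := hg (by simp only [hζr, hζs, one_pow])
  show d = 1
  rw [← hζ, hζ1, orderOf_one]

theorem apply_pow_ne_zero_of_injective_pow_mul_comp_pow {M : Type*} [MonoidWithZero M]
    {r s : ℕ} (hr : r ≠ 0) {g : M → M} (hg : Injective fun x => x ^ r * g (x ^ s))
    {x : M} (hx : x ≠ 0) : g (x ^ s) ≠ 0 := by
  intro h
  exact hx (hg (by simp only [h, mul_zero, zero_pow hr, zero_mul]))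

theorem Finset.prod_apply_eq_prod_of_image_eq {β : Type*} [CommMonoid β] [DecidableEq β]
    {T : Finset β} {h : β → β} (hT : T.image h = T) : ∏ z ∈ T, h z = ∏ z ∈ T, z := by
  conv_rhs => rw [← hT]
  rw [prod_image (injOn_of_card_image_eq (by rw [hT]))]

theorem dvd_two_mul_of_pow_mul_zpow_eq {G : Type*} [Group G] [Finite G] {γ : G} {l s r : ℕ}
    (hγ : orderOf γ = l * s) {b : ℤ}
    (h : ((γ ^ s) ^ ∑ i ∈ range l, i) ^ r * (γ ^ b) ^ s = (γ ^ s) ^ ∑ i ∈ range l, i) :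
    (l : ℤ) ∣ 2 * b := by
  set N := ∑ i ∈ range l, i
  have hls : l * s ≠ 0 := hγ ▸ (orderOf_pos γ).ne'
  have h1 : γ ^ (((N : ℤ) * (r - 1) + b) * s) = 1 := by
    rw [← mul_inv_eq_one] at h
    rw [← h]
    group
  rw [← orderOf_dvd_iff_zpow_eq_one, hγ, Nat.cast_mul] at h1
  obtain ⟨k, hk⟩ := Int.dvd_of_mul_dvd_mul_right (by exact_mod_cast right_ne_zero_of_mul hls) h1
  have hN : (N : ℤ) * 2 = l * (l - 1) := by
    rw [← Nat.cast_two, ← Nat.cast_mul, sum_range_id_mul_two, Nat.cast_mul,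
      Nat.cast_pred (Nat.pos_of_ne_zero (left_ne_zero_of_mul hls))]
  exact ⟨2 * k - (l - 1) * (r - 1), by linear_combination 2 * hk - ((r : ℤ) - 1) * hN⟩

section FiniteGroupWithZero

variable {G₀ : Type*} [Fintype G₀] {γ : G₀}

theorem ne_zero_of_orderOf_eq_card_sub_one [GroupWithZero G₀]
    (hγ : orderOf γ = Fintype.card G₀ - 1) : γ ≠ 0 := by
  rintro rfl
  rw [orderOf_zero] at hγ
  exact Nat.sub_ne_zero_of_lt Fintype.one_lt_card hγ.symm

theorem image_range_pow_eq_univ_erase_zero [GroupWithZero G₀] [DecidableEq G₀]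
    (hγ : orderOf γ = Fintype.card G₀ - 1) :
    (range (Fintype.card G₀ - 1)).image (γ ^ ·) = univ.erase 0 := by
  have hγ0 := ne_zero_of_orderOf_eq_card_sub_one hγ
  refine eq_of_subset_of_card_le (fun x hx => ?_) ?_
  · obtain ⟨i, -, rfl⟩ := mem_image.1 hx
    exact mem_erase.2 ⟨pow_ne_zero i hγ0, mem_univ _⟩
  · rw [card_image_of_injOn, card_range, card_erase_of_mem (mem_univ _), card_univ]
    rw [coe_range, ← hγ]
    exact pow_injOn_Iio_orderOf

variable {l s : ℕ}

theorem image_pow_univ_erase_zero [GroupWithZero G₀] [DecidableEq G₀]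
    (hγ : orderOf γ = Fintype.card G₀ - 1) (hls : Fintype.card G₀ - 1 = l * s) :
    (univ.erase 0).image (· ^ s) = (range l).image ((γ ^ s) ^ ·) := by
  have hls0 : l * s ≠ 0 := hls ▸ Nat.sub_ne_zero_of_lt Fintype.one_lt_card
  have hl : orderOf (γ ^ s) = l :=
    orderOf_pow_of_orderOf_eq_mul (hγ.trans hls) (right_ne_zero_of_mul hls0)
  rw [← image_range_pow_eq_univ_erase_zero hγ, image_image, hls]
  ext y
  simp only [mem_image, mem_range, comp_apply]
  constructor
  · rintro ⟨i, hi, rfl⟩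
    refine ⟨i % l, Nat.mod_lt _ (Nat.pos_of_ne_zero (left_ne_zero_of_mul hls0)), ?_⟩
    rw [← hl, pow_mod_orderOf, ← pow_mul, ← pow_mul, mul_comm]
  · rintro ⟨i, hi, rfl⟩
    have hs : 0 < s := Nat.pos_of_ne_zero (right_ne_zero_of_mul hls0)
    refine ⟨i, hi.trans_le (Nat.le_mul_of_pos_right l hs), ?_⟩
    rw [← pow_mul, ← pow_mul, mul_comm]

theorem prod_pow_mul_pow_eq_prod_of_bijective [CommGroupWithZero G₀]
    (hγ : orderOf γ = Fintype.card G₀ - 1) (hls : Fintype.card G₀ - 1 = l * s) {r : ℕ}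
    (hr : r ≠ 0) {g : G₀ → G₀} (hP : Bijective fun x => x ^ r * g (x ^ s)) :
    ∏ i ∈ range l, ((γ ^ s) ^ i) ^ r * g ((γ ^ s) ^ i) ^ s =
      ∏ i ∈ range l, (γ ^ s) ^ i := by
  classical
  have hs : s ≠ 0 := right_ne_zero_of_mul (hls ▸ Nat.sub_ne_zero_of_lt Fintype.one_lt_card)
  have hinj : Set.InjOn ((γ ^ s) ^ ·) (range l : Set ℕ) := by
    rw [coe_range, ← orderOf_pow_of_orderOf_eq_mul (hγ.trans hls) hs]
    exact pow_injOn_Iio_orderOf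
  suffices hT : ((range l).image ((γ ^ s) ^ ·)).image (fun z => z ^ r * g z ^ s) =
      (range l).image ((γ ^ s) ^ ·) by
    simpa only [prod_image hinj] using prod_apply_eq_prod_of_image_eq hT
  have hsemiconj :
      (fun z => z ^ r * g z ^ s) ∘ (· ^ s) = (· ^ s) ∘ fun x => x ^ r * g (x ^ s) :=
    funext fun x => by simp only [comp_apply, mul_pow, ← pow_mul, mul_comm r s]
  rw [← image_pow_univ_erase_zero hγ hls, image_image, hsemiconj, ← image_image,
    image_erase hP.injective, image_univ_of_surjective hP.surjective]
  simp only [zero_pow hr, zero_mul]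

end FiniteGroupWithZero

theorem stmt_2_general (q : ℕ)
    (F : Type*) [Field F] [Fintype F] (hF : Fintype.card F = q)
    (l s : ℕ) (hls : q - 1 = l * s)
    (γ : F) (hγ : orderOf γ = q - 1)
    (ξ : F) (hξ : ξ = γ ^ s)
    (f : Polynomial F) (r : ℕ) (hr : 0 < r)
    (A : ℕ → F) (hA : ∀ i, A i = f.eval (ξ ^ i))
    (hPP : Function.Bijective (fun x : F => x ^ r * f.eval (x ^ s))) :
    Nat.gcd r s = 1 ∧
    (∀ i ≤ l - 1, A i ≠ 0) ∧
    ∀ b : ℤ, γ ^ b = ∏ i ∈ Finset.range l, A i → (l : ℤ) ∣ 2 * b := by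
  subst hF hξ
  have hγ0 : γ ≠ 0 := ne_zero_of_orderOf_eq_card_sub_one hγ
  have hA' (i : ℕ) : A i = f.eval ((γ ^ i) ^ s) := by rw [hA, ← pow_mul, ← pow_mul, mul_comm]
  have hγ_order : orderOf γ ≠ 0 := hγ ▸ Nat.sub_ne_zero_of_lt Fintype.one_lt_card
  refine ⟨coprime_of_injective_pow_mul_comp_pow (g := (f.eval ·)) hγ_order
      (hγ.trans hls ▸ dvd_mul_left s l) hPP.injective, fun i _ => ?_, fun b hb => ?_⟩
  · rw [hA']
    exact apply_pow_ne_zero_of_injective_pow_mul_comp_pow (g := (f.eval ·)) hr.ne' hPP.injective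
      (pow_ne_zero i hγ0)
  have key := prod_pow_mul_pow_eq_prod_of_bijective (g := (f.eval ·)) hγ hls hr.ne' hPP
  rw [prod_mul_distrib, prod_pow, prod_pow, prod_pow_eq_pow_sum,
    prod_congr rfl fun i _ => (hA i).symm, ← hb] at key
  refine dvd_two_mul_of_pow_mul_zpow_eq (γ := Units.mk0 γ hγ0) (r := r)
    (by rw [← orderOf_units, Units.val_mk0, hγ, hls]) (Units.ext ?_)
  simpa only [Units.val_mul, Units.val_pow_eq_pow_val, Units.val_zpow_eq_zpow_val, Units.val_mk0]
    using key

/-- Let `0 < r < q - 1`. If `P(x) = x^r f(x^s)` is a permutation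
polynomial over `𝔽_q`, then (i) `gcd(r,s) = 1`; (ii) `A_i = f(ξ^i) ≠ 0` for all
`i = 0, …, l-1`; (iii) for every integer `b` with `γ^b = A_0 A_1 ⋯ A_{l-1}`,
`l` divides `2b`. -/
theorem stmt_2 (p m q : ℕ) (hp : p.Prime) (hm : 0 < m) (hq : q = p ^ m)
    (F : Type*) [Field F] [Fintype F] (hF : Fintype.card F = q)
    (l s : ℕ) (hl : 0 < l) (hs : 0 < s) (hls : q - 1 = l * s)
    (γ : F) (hγ : orderOf γ = q - 1)
    (ξ : F) (hξ : ξ = γ ^ s)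
    (f : Polynomial F) (r : ℕ) (hr : 0 < r) (hr' : r < q - 1)
    (A : ℕ → F) (hA : ∀ i, A i = f.eval (ξ ^ i))
    (hPP : Function.Bijective (fun x : F => x ^ r * f.eval (x ^ s))) :
    Nat.gcd r s = 1 ∧
    (∀ i ≤ l - 1, A i ≠ 0) ∧
    ∀ b : ℤ, γ ^ b = ∏ i ∈ Finset.range l, A i → (l : ℤ) ∣ 2 * b :=
  stmt_2_general q F hF l s hls γ hγ ξ hξ f r hr A hA hPP
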